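/- arXiv:2510.26504 — 2 statements merged into one kernel-verified Lean document; each statement's English description precedes it below -/
import Mathlib

section
/- Let f : Q → Q' be a diffeomorphism between quadrants Q ⊆ V and Q' ⊆ V' fixing nothing in particular, with Q defined by linear forms {ℓ_i}_{i=1}^r and Q' by {ℓ'_j}_{j=1}^r. Then the differential d₀f : V → V' at the origin (assuming 0 ∈ Q, f(0) = 0) is a linear isomorphism that maps Q onto Q' (as subsets of V and V'). -/
/-!
Let `G` extend `f⁻¹`. Since `G ∘ F = id` on `Q`, and `Q` is convex with nonempty interior (this is
where the linear independence of the `ℓ i` enters), derivatives within `Q` are unique, so the chain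
rule gives `d₀G ∘ d₀F = id` even though `0` is a corner of `Q`; symmetrically `d₀F ∘ d₀G = id`.
For `v ∈ Q` the difference quotients `t⁻¹ • F (t • v)`, `t > 0`, lie in the closed cone `Q'`, hence
so does their limit `d₀F v`; likewise `d₀G` maps `Q'` into `Q`, so `d₀F '' Q = Q'`.
-/

open Set

def WeaklySmooth {E F : Type*} [NormedAddCommGroup E] [NormedSpace ℝ E]
    [NormedAddCommGroup F] [NormedSpace ℝ F] (A : Set E) (f : E → F) : Prop :=
  ∃ U : Set E, IsOpen U ∧ A ⊆ U ∧
    ∃ g : E → F, ContDiffOn ℝ (⊤ : ℕ∞) g U ∧ EqOn f g A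

open Filter Function

section Quadrant

variable {V : Type*} [AddCommGroup V] [Module ℝ V] {ι : Type*}

def quadrant (ℓ : ι → V →ₗ[ℝ] ℝ) : Set V := {x | ∀ i, 0 ≤ ℓ i x}

variable {ℓ : ι → V →ₗ[ℝ] ℝ}

theorem zero_mem_quadrant : (0 : V) ∈ quadrant ℓ := fun i => (map_zero (ℓ i)).ge

theorem smul_mem_quadrant {t : ℝ} (ht : 0 ≤ t) {x : V} (hx : x ∈ quadrant ℓ) :
    t • x ∈ quadrant ℓ := fun i => by
  rw [map_smul, smul_eq_mul]
  exact mul_nonneg ht (hx i)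

theorem convex_quadrant : Convex ℝ (quadrant ℓ) := by
  intro x hx y hy a b ha hb _ i
  rw [map_add, map_smul, map_smul, smul_eq_mul, smul_eq_mul]
  exact add_nonneg (mul_nonneg ha (hx i)) (mul_nonneg hb (hy i))

theorem LinearIndependent.exists_forall_apply_eq_one [FiniteDimensional ℝ V]
    (hℓ : LinearIndependent ℝ ℓ) : ∃ x : V, ∀ i, ℓ i x = 1 := by
  obtain ⟨φ, hφ⟩ := Module.exists_dual_forall_apply_eq_one (linearIndepOn_univ_iff.mpr hℓ)
  refine ⟨(Module.evalEquiv ℝ V).symm φ, fun i => ?_⟩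
  simpa using hφ i (mem_univ i)

variable [TopologicalSpace V] [IsTopologicalAddGroup V] [ContinuousSMul ℝ V] [T2Space V]
  [FiniteDimensional ℝ V]

theorem isClosed_quadrant : IsClosed (quadrant ℓ) := by
  rw [quadrant, ofPred_forall]
  exact isClosed_iInter fun i =>
    isClosed_le continuous_const (ℓ i).continuous_of_finiteDimensional

theorem interior_quadrant_nonempty [Finite ι] (hℓ : LinearIndependent ℝ ℓ) :
    (interior (quadrant ℓ)).Nonempty := by
  obtain ⟨x, hx⟩ := hℓ.exists_forall_apply_eq_one
  refine ⟨x, mem_interior.mpr ⟨{y | ∀ i, 0 < ℓ i y}, fun y hy i => (hy i).le, ?_, ?_⟩⟩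
  · rw [ofPred_forall]
    exact isOpen_iInter_of_finite fun i =>
      isOpen_lt continuous_const (ℓ i).continuous_of_finiteDimensional
  · simp [hx]

end Quadrant

section Calculus

variable {E F : Type*} [NormedAddCommGroup E] [NormedSpace ℝ E] [NormedAddCommGroup F]
  [NormedSpace ℝ F]

theorem fderiv_comp_fderiv_eq_id_of_leftInvOn {s : Set E} {f : E → F} {g : F → E} {x : E}
    {y : F} (hs : UniqueDiffWithinAt ℝ s x) (hx : x ∈ s) (hfx : f x = y)
    (hf : DifferentiableAt ℝ f x) (hg : DifferentiableAt ℝ g y) (hgf : LeftInvOn g f s) :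
    (fderiv ℝ g y).comp (fderiv ℝ f x) = ContinuousLinearMap.id ℝ E := by
  subst hfx
  exact hs.eq (hg.hasFDerivAt.comp x hf.hasFDerivAt).hasFDerivWithinAt
    ((hasFDerivWithinAt_id x s).congr' hgf hx)

theorem fderiv_apply_mem_of_isClosed_of_smul_mem {C : Set F} (hC : IsClosed C)
    (hCsmul : ∀ t : ℝ, 0 < t → ∀ y ∈ C, t • y ∈ C) {f : E → F} (hf : DifferentiableAt ℝ f 0)
    (hf0 : f 0 = 0) {v : E} (hv : ∀ t : ℝ, 0 < t → f (t • v) ∈ C) : fderiv ℝ f 0 v ∈ C :=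
  hC.mem_of_tendsto (hf.hasFDerivAt.lim_real v) <| (eventually_gt_atTop 0).mono fun c hc => by
    simpa [hf0] using hCsmul c hc _ (hv c⁻¹ (inv_pos.2 hc))

variable {ι ι' : Type*}

theorem uniqueDiffWithinAt_quadrant [FiniteDimensional ℝ E] [Finite ι] {ℓ : ι → E →ₗ[ℝ] ℝ}
    (hℓ : LinearIndependent ℝ ℓ) {x : E} (hx : x ∈ quadrant ℓ) :
    UniqueDiffWithinAt ℝ (quadrant ℓ) x :=
  uniqueDiffWithinAt_convex convex_quadrant (interior_quadrant_nonempty hℓ) (subset_closure hx)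

theorem mapsTo_fderiv_quadrant [FiniteDimensional ℝ F] {ℓ : ι → E →ₗ[ℝ] ℝ}
    {ℓ' : ι' → F →ₗ[ℝ] ℝ} {f : E → F}
    (hf : DifferentiableAt ℝ f 0) (hf0 : f 0 = 0) (hmaps : MapsTo f (quadrant ℓ) (quadrant ℓ')) :
    MapsTo (fderiv ℝ f 0) (quadrant ℓ) (quadrant ℓ') := fun _ hv =>
  fderiv_apply_mem_of_isClosed_of_smul_mem isClosed_quadrant
    (fun _ ht _ hy => smul_mem_quadrant ht.le hy) hf hf0
    fun _ ht => hmaps (smul_mem_quadrant ht.le hv)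

end Calculus

theorem quadrant_diffeo_differential_at_zero_general
    {V V' : Type*} [NormedAddCommGroup V] [NormedSpace ℝ V] [FiniteDimensional ℝ V]
    [NormedAddCommGroup V'] [NormedSpace ℝ V'] [FiniteDimensional ℝ V']
    {r : ℕ} (ℓ : Fin r → V →ₗ[ℝ] ℝ) (ℓ' : Fin r → V' →ₗ[ℝ] ℝ)
    (hℓ : LinearIndependent ℝ ℓ) (hℓ' : LinearIndependent ℝ ℓ')
    (Q : Set V) (Q' : Set V')
    (hQ : Q = {x | ∀ i, 0 ≤ ℓ i x}) (hQ' : Q' = {y | ∀ j, 0 ≤ ℓ' j y})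
    (f : V → V') (g : V' → V)
    (hg : WeaklySmooth Q' g)
    (hfQ : MapsTo f Q Q') (hgQ : MapsTo g Q' Q)
    (hgf : ∀ x ∈ Q, g (f x) = x) (hfg : ∀ y ∈ Q', f (g y) = y)
    (hf0 : f 0 = 0) :
    ∀ (U : Set V) (F : V → V'), IsOpen U → Q ⊆ U →
      ContDiffOn ℝ (⊤ : ℕ∞) F U → EqOn f F Q →
      Function.Bijective (fderiv ℝ F 0) ∧ (fderiv ℝ F 0) '' Q = Q' := by
  intro U F hU hQU hF hfF
  obtain ⟨U', hU', hQU', G, hG, hgG⟩ := hg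
  obtain rfl : Q = quadrant ℓ := hQ
  obtain rfl : Q' = quadrant ℓ' := hQ'
  have hFQ : MapsTo F _ _ := hfQ.congr hfF
  have hGQ : MapsTo G _ _ := hgQ.congr hgG
  have hGF : InvOn G F (quadrant ℓ) (quadrant ℓ') :=
    ⟨(LeftInvOn.congr_left hgf hfQ hgG).congr_right hfF,
      (LeftInvOn.congr_left hfg hgQ hfF).congr_right hgG⟩
  have hF0 : F 0 = 0 := (hfF zero_mem_quadrant).symm.trans hf0
  have hG0 : G 0 = 0 := by simpa [hF0] using hGF.1 zero_mem_quadrant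
  have hFd : DifferentiableAt ℝ F 0 :=
    (hF.contDiffAt (hU.mem_nhds (hQU zero_mem_quadrant))).differentiableAt (by simp)
  have hGd : DifferentiableAt ℝ G 0 :=
    (hG.contDiffAt (hU'.mem_nhds (hQU' zero_mem_quadrant))).differentiableAt (by simp)
  have hBA : LeftInverse (fderiv ℝ G 0) (fderiv ℝ F 0) := DFunLike.congr_fun <|
    fderiv_comp_fderiv_eq_id_of_leftInvOn (uniqueDiffWithinAt_quadrant hℓ zero_mem_quadrant)
      zero_mem_quadrant hF0 hFd hGd hGF.1
  have hAB : RightInverse (fderiv ℝ G 0) (fderiv ℝ F 0) := DFunLike.congr_fun <|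
    fderiv_comp_fderiv_eq_id_of_leftInvOn (uniqueDiffWithinAt_quadrant hℓ' zero_mem_quadrant)
      zero_mem_quadrant hG0 hGd hFd hGF.2
  refine ⟨⟨hBA.injective, hAB.surjective⟩, ?_⟩
  exact (InvOn.bijOn ⟨hBA.leftInvOn _, hAB.rightInvOn _⟩ (mapsTo_fderiv_quadrant hFd hF0 hFQ)
    (mapsTo_fderiv_quadrant hGd hG0 hGQ)).image_eq

/-- Let `f : Q → Q'` be a diffeomorphism of quadrants with `f 0 = 0`.  The differential
of `f` at the origin (computed via any smooth local extension `F` of `f` to an open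
neighborhood of `Q`) is a linear isomorphism `V → V'` mapping `Q` onto `Q'`. -/
theorem quadrant_diffeo_differential_at_zero
    {V V' : Type*} [NormedAddCommGroup V] [NormedSpace ℝ V] [FiniteDimensional ℝ V]
    [NormedAddCommGroup V'] [NormedSpace ℝ V'] [FiniteDimensional ℝ V']
    {r : ℕ} (ℓ : Fin r → V →ₗ[ℝ] ℝ) (ℓ' : Fin r → V' →ₗ[ℝ] ℝ)
    (hℓ : LinearIndependent ℝ ℓ) (hℓ' : LinearIndependent ℝ ℓ')
    (Q : Set V) (Q' : Set V')
    (hQ : Q = {x | ∀ i, 0 ≤ ℓ i x}) (hQ' : Q' = {y | ∀ j, 0 ≤ ℓ' j y})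
    (f : V → V') (g : V' → V)
    (hf : WeaklySmooth Q f) (hg : WeaklySmooth Q' g)
    (hfQ : MapsTo f Q Q') (hgQ : MapsTo g Q' Q)
    (hgf : ∀ x ∈ Q, g (f x) = x) (hfg : ∀ y ∈ Q', f (g y) = y)
    (hf0 : f 0 = 0) :
    ∀ (U : Set V) (F : V → V'), IsOpen U → Q ⊆ U →
      ContDiffOn ℝ (⊤ : ℕ∞) F U → EqOn f F Q →
      Function.Bijective (fderiv ℝ F 0) ∧ (fderiv ℝ F 0) '' Q = Q' :=
  quadrant_diffeo_differential_at_zero_general ℓ ℓ' hℓ hℓ' Q Q' hQ hQ' f g hg hfQ hgQ hgf hfg hf0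
end

section
/- The evaluation-at-centers map ev₀ from the space of open rectilinear embeddings Rect(⊔_{i∈I} □^{p,R_i}, □^{p,q}) to the configuration space Conf_{R}(□^{p,q}) (configurations where the i-th point lies in the stratum □^{p,q}_{[R_i]}, all points pairwise distinct) admits a continuous section s with ev₀ ∘ s = id, and s ∘ ev₀ is homotopic to the identity; in particular ev₀ is a homotopy equivalence. -/
open Set

/-- Points of `ℝ^{p+q} = ℝ^p × ℝ^q`. -/
abbrev Pt (p q : ℕ) := (Fin p → ℝ) × (Fin q → ℝ)

/-- The cube `□^{p,Q} = (-1,1)^p × ∏ δ_i` where `δ_i = [0,1)` for `i ∈ Q`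
and `δ_i = (-1,1)` otherwise. -/
def cube (p q : ℕ) (Q : Set (Fin q)) : Set (Pt p q) :=
  {x | (∀ i, x.1 i ∈ Ioo (-1 : ℝ) 1) ∧
    ∀ j, (j ∈ Q → x.2 j ∈ Ico (0 : ℝ) 1) ∧ (j ∉ Q → x.2 j ∈ Ioo (-1 : ℝ) 1)}

/-- A rectilinear map of `ℝ^{p+q}`: composition of a coordinatewise dilation with
positive factors and a translation. -/
def IsRectilinear (p q : ℕ) (f : Pt p q → Pt p q) : Prop :=
  ∃ (a b : Fin p → ℝ) (c e : Fin q → ℝ),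
    (∀ i, 0 < a i) ∧ (∀ j, 0 < c j) ∧
      ∀ x : Pt p q, f x = (fun i => a i * x.1 i + b i, fun j => c j * x.2 j + e j)

/-- An open rectilinear embedding `□^{p,Q'} ↪ □^{p,Q}`: the restriction of a rectilinear
map sending `□^{p,Q'}` into `□^{p,Q}`, whose image is open in `□^{p,Q}`
(rectilinear maps are automatically injective). -/
def OpenRectEmb (p q : ℕ) (f : Pt p q → Pt p q) (Q' Q : Set (Fin q)) : Prop :=
  IsRectilinear p q f ∧ f '' cube p q Q' ⊆ cube p q Q ∧
    ∃ O : Set (Pt p q), IsOpen O ∧ f '' cube p q Q' = O ∩ cube p q Q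

/-- The deepest stratum `□^{p,Q}_{[Q]}` of `□^{p,Q}`: the points whose coordinates
indexed by `Q` all vanish. -/
def deepStratum (p q : ℕ) (Q : Set (Fin q)) : Set (Pt p q) :=
  {x ∈ cube p q Q | ∀ j ∈ Q, x.2 j = 0}

/-- The configuration space `Conf_R(□^{p,q})`: tuples of pairwise distinct points with
`x i` in the stratum of `□^{p,q}` where exactly the coordinates indexed by `R i`
(among the last `q`) vanish. -/
def ConfSet (p q : ℕ) (ι : Type) (R : ι → Set (Fin q)) : Set (ι → Pt p q) :=
  {x | (∀ i, x i ∈ cube p q Set.univ ∧ ∀ j, ((x i).2 j = 0 ↔ j ∈ R i)) ∧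
    Function.Injective x}

/-- The space `Rect(⊔_i □^{p,R_i}, □^{p,q})` of tuples of open rectilinear embeddings
`ι_i : □^{p,R_i} ↪ □^{p,q}` that are jointly injective, with the compact-open topology. -/
abbrev RectSpace (p q : ℕ) (ι : Type) (R : ι → Set (Fin q)) : Type :=
  {f : ι → C(Pt p q, Pt p q) //
    (∀ i, OpenRectEmb p q (f i) (R i) Set.univ) ∧
    ∀ (i j : ι) (x y : Pt p q), x ∈ cube p q (R i) → y ∈ cube p q (R j) →
      f i x = f j y → i = j ∧ x = y}

/-!
An open rectilinear embedding of `□^{p,Q}` into `□^{p,q}` is `x ↦ a * x + z` with `a` positive in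
every coordinate. Openness of its image forces the centre `z` into the stratum where exactly the
coordinates in `Q` vanish; conversely, for such `z` every `a` whose image stays in `□^{p,q}` gives
an open embedding, and both conditions survive shrinking `a`. The section puts cubes of a common
radius `room c` around the points of a configuration `c`, where `room` is continuous, positive on
configurations, and at most the distance to the walls and half the mutual distances. The
homotopy moves each scale `a` to `min a (room c)` and then to `room c`: during the first half
every cube lies inside the original one, during the second inside the ball of radius `room c`,
so joint injectivity is never lost.
-/

open Function Filter Topology

section Cube

variable {p q : ℕ} {Q : Set (Fin q)}

lemma pt_norm_lt_iff {x : Pt p q} {r : ℝ} (hr : 0 < r) :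
    ‖x‖ < r ↔ (∀ k, |x.1 k| < r) ∧ ∀ j, |x.2 j| < r := by
  simp [Prod.norm_def, pi_norm_lt_iff hr]

-- `Pt p q` carries the sup norm, so the ball is the open cube `(-1, 1)^{p+q}`.
lemma cube_eq_ball_inter (Q : Set (Fin q)) :
    cube p q Q = Metric.ball 0 1 ∩ {x | ∀ j ∈ Q, 0 ≤ x.2 j} := by
  ext x
  simp only [cube, mem_ball_zero_iff, pt_norm_lt_iff one_pos, abs_lt, mem_Ioo, mem_Ico,
    mem_inter_iff, mem_ofPred_eq]
  refine ⟨fun ⟨h₁, h₂⟩ => ⟨⟨h₁, fun j => ?_⟩, fun j hj => ((h₂ j).1 hj).1⟩,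
    fun ⟨⟨h₁, h₂⟩, h₃⟩ => ⟨h₁, fun j => ⟨fun hj => ⟨h₃ j hj, (h₂ j).2⟩, fun _ => h₂ j⟩⟩⟩
  by_cases hj : j ∈ Q
  · exact ⟨by linarith [((h₂ j).1 hj).1], ((h₂ j).1 hj).2⟩
  · exact (h₂ j).2 hj

lemma zero_mem_cube (Q : Set (Fin q)) : (0 : Pt p q) ∈ cube p q Q := by
  simp [cube_eq_ball_inter]

lemma mul_mem_cube {c x : Pt p q} (hc₀ : 0 ≤ c) (hc₁ : c ≤ 1) (hx : x ∈ cube p q Q) :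
    c * x ∈ cube p q Q := by
  rw [cube_eq_ball_inter] at hx ⊢
  refine ⟨?_, fun j hj => mul_nonneg (hc₀.2 j) (hx.2 j hj)⟩
  have hx₁ := (pt_norm_lt_iff one_pos).1 (mem_ball_zero_iff.1 hx.1)
  rw [mem_ball_zero_iff, pt_norm_lt_iff one_pos]
  refine ⟨fun k => ?_, fun j => ?_⟩
  · rw [Prod.fst_mul, Pi.mul_apply, abs_mul, abs_of_nonneg (hc₀.1 k)]
    exact (mul_le_of_le_one_left (abs_nonneg _) (hc₁.1 k)).trans_lt (hx₁.1 k)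
  · rw [Prod.snd_mul, Pi.mul_apply, abs_mul, abs_of_nonneg (hc₀.2 j)]
    exact (mul_le_of_le_one_left (abs_nonneg _) (hc₁.2 j)).trans_lt (hx₁.2 j)

def axisVec (j : Fin q) : Pt p q := (0, Pi.single j 1)

lemma add_smul_axisVec_mem_cube {x : Pt p q} {j : Fin q} {t : ℝ} (hx : x ∈ cube p q Q)
    (ht : x.2 j + t ∈ Ioo (-1) 1) (htQ : j ∈ Q → 0 ≤ x.2 j + t) :
    x + t • axisVec j ∈ cube p q Q := by
  refine ⟨fun k => by simpa [axisVec] using hx.1 k, fun j' => ?_⟩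
  by_cases hj' : j' = j
  · subst hj'
    simpa [axisVec] using ⟨fun hj => ⟨htQ hj, ht.2⟩, fun _ => ht⟩
  · simpa [axisVec, Pi.single_apply, hj'] using hx.2 j'

end Cube

section RectMap

variable {p q : ℕ} {a b z x y : Pt p q} {Q : Set (Fin q)}

def rectMap (a z x : Pt p q) : Pt p q := a * x + z

def IsPosScale (a : Pt p q) : Prop := (∀ k, 0 < a.1 k) ∧ ∀ j, 0 < a.2 j

@[fun_prop]
lemma Continuous.rectMap {X : Type*} [TopologicalSpace X] {a z x : X → Pt p q}
    (ha : Continuous a) (hz : Continuous z) (hx : Continuous x) :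
    Continuous fun t => rectMap (a t) (z t) (x t) := by
  show Continuous fun t => a t * x t + z t
  fun_prop

@[simp] lemma rectMap_zero : rectMap a z 0 = z := by simp [rectMap]

lemma IsPosScale.isUnit (ha : IsPosScale a) : IsUnit a := by
  simp only [Prod.isUnit_iff, Pi.isUnit_iff, isUnit_iff_ne_zero]
  exact ⟨fun k => (ha.1 k).ne', fun j => (ha.2 j).ne'⟩

lemma IsPosScale.nonneg (ha : IsPosScale a) : 0 ≤ a :=
  ⟨fun k => (ha.1 k).le, fun j => (ha.2 j).le⟩

lemma isPosScale_smul_one {e : ℝ} (he : 0 < e) : IsPosScale (e • 1 : Pt p q) := by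
  simp [IsPosScale, he]

lemma mem_image_rectMap_iff (ha : IsPosScale a) {S : Set (Pt p q)} :
    y ∈ rectMap a z '' S ↔ (y - z) / a ∈ S := by
  constructor
  · rintro ⟨x, hx, rfl⟩
    rwa [rectMap, add_sub_cancel_right, ha.isUnit.mul_div_cancel_left]
  · exact fun hy => ⟨_, hy, by rw [rectMap, ha.isUnit.mul_div_cancel, sub_add_cancel]⟩

lemma rectMap_injective (ha : IsPosScale a) : Injective (rectMap a z) := by
  intro x y h
  simpa [rectMap, ha.isUnit.mul_right_inj] using h

lemma IsRectilinear.eq_rectMap {f : Pt p q → Pt p q} (hf : IsRectilinear p q f) :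
    IsPosScale (f 1 - f 0) ∧ f = rectMap (f 1 - f 0) (f 0) := by
  obtain ⟨a, b, c, e, ha, hc, hf⟩ := hf
  have hscale : f 1 - f 0 = (a, c) := by ext <;> simp [hf]
  refine ⟨hscale ▸ ⟨ha, hc⟩, funext fun x => ?_⟩
  rw [hscale, hf, hf]
  ext <;> simp [rectMap]

lemma isRectilinear_rectMap (ha : IsPosScale a) : IsRectilinear p q (rectMap a z) :=
  ⟨a.1, z.1, a.2, z.2, ha.1, ha.2, fun _ => rfl⟩

lemma image_rectMap_subset_of_le (ha : IsPosScale a) (hb : 0 ≤ b) (hba : b ≤ a) :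
    rectMap b z '' cube p q Q ⊆ rectMap a z '' cube p q Q := by
  rintro _ ⟨x, hx, rfl⟩
  rw [mem_image_rectMap_iff ha, rectMap, add_sub_cancel_right, mul_div_right_comm]
  refine mul_mem_cube ⟨fun k => ?_, fun j => ?_⟩ ⟨fun k => ?_, fun j => ?_⟩ hx
  · exact div_nonneg (hb.1 k) (ha.1 k).le
  · exact div_nonneg (hb.2 j) (ha.2 j).le
  · exact div_le_one_of_le₀ (hba.1 k) (ha.1 k).le
  · exact div_le_one_of_le₀ (hba.2 j) (ha.2 j).le

lemma image_rectMap_smul_one_subset_ball {e : ℝ} (he : 0 < e) :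
    rectMap (e • 1) z '' cube p q Q ⊆ Metric.ball z e := by
  rintro _ ⟨x, hx, rfl⟩
  rw [cube_eq_ball_inter] at hx
  rw [Metric.mem_ball, dist_eq_norm, rectMap, smul_one_mul, add_sub_cancel_right, norm_smul,
    Real.norm_of_nonneg he.le]
  exact mul_lt_of_lt_one_right he (mem_ball_zero_iff.1 hx.1)

lemma image_rectMap_smul_one_subset_cube {e : ℝ} (he : 0 < e) (hz : z ∈ cube p q univ)
    (he₁ : e ≤ 1 - ‖z‖) (heQ : ∀ j ∉ Q, e ≤ z.2 j) :
    rectMap (e • 1) z '' cube p q Q ⊆ cube p q univ := by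
  rintro _ ⟨x, hx, rfl⟩
  rw [cube_eq_ball_inter] at hx hz ⊢
  have hx₁ : ‖x‖ < 1 := mem_ball_zero_iff.1 hx.1
  refine ⟨mem_ball_zero_iff.2 ?_, fun j _ => ?_⟩
  · calc ‖rectMap (e • 1) z x‖ ≤ e * ‖x‖ + ‖z‖ := by
          simpa [rectMap, norm_smul, Real.norm_of_nonneg he.le] using norm_add_le (e • x) z
      _ < e + ‖z‖ := by gcongr; exact mul_lt_of_lt_one_right he hx₁
      _ ≤ 1 := by linarith
  · have hxj : -1 < x.2 j := (abs_lt.1 (((pt_norm_lt_iff one_pos).1 hx₁).2 j)).1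
    simp only [rectMap, smul_one_mul, Prod.snd_add, Prod.smul_snd, Pi.add_apply, Pi.smul_apply,
      smul_eq_mul]
    by_cases hj : j ∈ Q
    · exact add_nonneg (mul_nonneg he.le (hx.2 j hj)) (hz.2 j trivial)
    · nlinarith [heQ j hj]

end RectMap

section OpenRectEmb

variable {p q : ℕ} {a b z : Pt p q} {Q : Set (Fin q)}

lemma openRectEmb_rectMap_of_subset (ha : IsPosScale a) (hz : ∀ j, z.2 j = 0 ↔ j ∈ Q)
    (hsub : rectMap a z '' cube p q Q ⊆ cube p q univ) :
    OpenRectEmb p q (rectMap a z) Q univ := by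
  refine ⟨isRectilinear_rectMap ha, hsub, (fun y => (y - z) / a) ⁻¹' Metric.ball 0 1,
    Metric.isOpen_ball.preimage (by fun_prop), ?_⟩
  ext y
  refine ⟨fun hy => ⟨?_, hsub hy⟩, fun ⟨hball, hy⟩ => ?_⟩
  · rw [mem_image_rectMap_iff ha, cube_eq_ball_inter] at hy
    exact hy.1
  · rw [mem_image_rectMap_iff ha, cube_eq_ball_inter]
    refine ⟨hball, fun j hj => ?_⟩
    rw [cube_eq_ball_inter] at hy
    simpa [(hz j).2 hj] using div_nonneg (hy.2 j trivial) (ha.2 j).le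

lemma mem_of_openRectEmb_of_eq_zero (ha : IsPosScale a)
    (h : OpenRectEmb p q (rectMap a z) Q univ) {j : Fin q} (hzj : z.2 j = 0) : j ∈ Q := by
  by_contra hj
  have hx : (0 : Pt p q) + (-(1 / 2) : ℝ) • axisVec j ∈ cube p q Q :=
    add_smul_axisVec_mem_cube (zero_mem_cube Q) (by norm_num) (absurd · hj)
  have hval : (rectMap a z (0 + (-(1 / 2) : ℝ) • axisVec j)).2 j = -(a.2 j / 2) := by
    simp [rectMap, axisVec, hzj, div_eq_inv_mul]
  have := ((h.2.1 ⟨_, hx, rfl⟩).2 j).1 trivial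
  rw [hval] at this
  linarith [this.1, ha.2 j]

-- If `z.2 j > 0`, the points just below `z` in direction `j` lie in the open image, but their
-- preimages would need a negative coordinate `j ∈ Q`.
lemma eq_zero_of_openRectEmb_of_mem (ha : IsPosScale a)
    (h : OpenRectEmb p q (rectMap a z) Q univ) {j : Fin q} (hj : j ∈ Q) : z.2 j = 0 := by
  obtain ⟨O, hO, himage⟩ := h.2.2
  have hz : z ∈ rectMap a z '' cube p q Q := ⟨0, zero_mem_cube Q, rectMap_zero⟩
  have hzc : z ∈ cube p q univ := h.2.1 hz
  by_contra hzj
  have hzpos : 0 < z.2 j := lt_of_le_of_ne ((hzc.2 j).1 trivial).1 (Ne.symm hzj)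
  have hpath : Tendsto (fun t : ℝ => z + (-t) • axisVec j) (𝓝[>] 0) (𝓝 z) :=
    (Continuous.tendsto' (by fun_prop) 0 z (by simp)).mono_left nhdsWithin_le_nhds
  obtain ⟨t, ⟨htO, htz⟩, ht⟩ := ((hpath.eventually (hO.mem_nhds (himage ▸ hz).1)).and
    (nhdsWithin_le_nhds (Iio_mem_nhds hzpos)) |>.and self_mem_nhdsWithin).exists
  have hy : z + (-t) • axisVec j ∈ cube p q univ :=
    add_smul_axisVec_mem_cube hzc ⟨by linarith, by linarith [((hzc.2 j).1 trivial).2]⟩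
      fun _ => by linarith
  have hyim : z + (-t) • axisVec j ∈ rectMap a z '' cube p q Q := himage ▸ ⟨htO, hy⟩
  rw [mem_image_rectMap_iff ha, cube_eq_ball_inter] at hyim
  have hval : ((z + (-t) • axisVec j - z) / a).2 j = -t / a.2 j := by simp [axisVec]
  have := hyim.2 j hj
  rw [hval] at this
  exact this.not_gt (div_neg_of_neg_of_pos (neg_neg_of_pos ht) (ha.2 j))

theorem openRectEmb_rectMap_iff (ha : IsPosScale a) :
    OpenRectEmb p q (rectMap a z) Q univ ↔
      (∀ j, z.2 j = 0 ↔ j ∈ Q) ∧ rectMap a z '' cube p q Q ⊆ cube p q univ :=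
  ⟨fun h => ⟨fun _ => ⟨mem_of_openRectEmb_of_eq_zero ha h, eq_zero_of_openRectEmb_of_mem ha h⟩,
    h.2.1⟩, fun h => openRectEmb_rectMap_of_subset ha h.1 h.2⟩

lemma openRectEmb_rectMap_of_le (ha : IsPosScale a) (h : OpenRectEmb p q (rectMap a z) Q univ)
    (hb : IsPosScale b) (hba : b ≤ a) : OpenRectEmb p q (rectMap b z) Q univ :=
  (openRectEmb_rectMap_iff hb).2 ⟨((openRectEmb_rectMap_iff ha).1 h).1,
    (image_rectMap_subset_of_le ha hb.nonneg hba).trans h.2.1⟩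

end OpenRectEmb

section ViaMin

-- Goes from `a` at `t = 0` through `min a e` at `t = 1/2` to `e` at `t = 1`.
noncomputable def viaMin (t a e : ℝ) : ℝ :=
  min a e + max 0 (1 - 2 * t) * (a - min a e) + max 0 (2 * t - 1) * (e - min a e)

variable {t a e : ℝ}

@[simp] lemma viaMin_zero (a e : ℝ) : viaMin 0 a e = a := by norm_num [viaMin]

@[simp] lemma viaMin_one (a e : ℝ) : viaMin 1 a e = e := by norm_num [viaMin]

lemma viaMin_pos (ha : 0 < a) (he : 0 < e) : 0 < viaMin t a e := by
  have h₁ : 0 ≤ max 0 (1 - 2 * t) * (a - min a e) :=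
    mul_nonneg (le_max_left _ _) (sub_nonneg.2 (min_le_left _ _))
  have h₂ : 0 ≤ max 0 (2 * t - 1) * (e - min a e) :=
    mul_nonneg (le_max_left _ _) (sub_nonneg.2 (min_le_right _ _))
  have := lt_min ha he
  unfold viaMin
  linarith

lemma viaMin_le_left (h₀ : 0 ≤ t) (h : t ≤ 1 / 2) : viaMin t a e ≤ a := by
  unfold viaMin
  rw [max_eq_left (by linarith : 2 * t - 1 ≤ 0), max_eq_right (by linarith : (0 : ℝ) ≤ 1 - 2 * t)]
  nlinarith [min_le_left a e]

lemma viaMin_le_right (h : 1 / 2 ≤ t) (h₁ : t ≤ 1) : viaMin t a e ≤ e := by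
  unfold viaMin
  rw [max_eq_left (by linarith : 1 - 2 * t ≤ 0), max_eq_right (by linarith : (0 : ℝ) ≤ 2 * t - 1)]
  nlinarith [min_le_right a e]

@[fun_prop]
lemma Continuous.viaMin {X : Type*} [TopologicalSpace X] {t a e : X → ℝ} (ht : Continuous t)
    (ha : Continuous a) (he : Continuous e) : Continuous fun x => viaMin (t x) (a x) (e x) := by
  show Continuous fun x => min (a x) (e x) + max 0 (1 - 2 * t x) * (a x - min (a x) (e x)) +
    max 0 (2 * t x - 1) * (e x - min (a x) (e x))
  fun_prop

variable {p q : ℕ} {s : Pt p q}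

noncomputable def viaMinScale (t e : ℝ) (s : Pt p q) : Pt p q :=
  (fun k => viaMin t (s.1 k) e, fun j => viaMin t (s.2 j) e)

@[simp] lemma viaMinScale_zero : viaMinScale 0 e s = s := by simp [viaMinScale]

@[simp] lemma viaMinScale_one : viaMinScale 1 e s = e • 1 := by
  ext <;> simp [viaMinScale]

lemma isPosScale_viaMinScale (hs : IsPosScale s) (he : 0 < e) :
    IsPosScale (viaMinScale t e s) :=
  ⟨fun k => viaMin_pos (hs.1 k) he, fun j => viaMin_pos (hs.2 j) he⟩

lemma viaMinScale_le_left (h₀ : 0 ≤ t) (h : t ≤ 1 / 2) : viaMinScale t e s ≤ s :=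
  ⟨fun _ => viaMin_le_left h₀ h, fun _ => viaMin_le_left h₀ h⟩

lemma viaMinScale_le_right (h : 1 / 2 ≤ t) (h₁ : t ≤ 1) : viaMinScale t e s ≤ e • 1 :=
  ⟨fun _ => by simpa [viaMinScale] using viaMin_le_right h h₁,
    fun _ => by simpa [viaMinScale] using viaMin_le_right h h₁⟩

@[fun_prop]
lemma Continuous.viaMinScale {X : Type*} [TopologicalSpace X] {t e : X → ℝ} {s : X → Pt p q}
    (ht : Continuous t) (he : Continuous e) (hs : Continuous s) :
    Continuous fun x => viaMinScale (t x) (e x) (s x) := by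
  show Continuous fun x => ((fun k => _root_.viaMin (t x) ((s x).1 k) (e x)),
    fun j => _root_.viaMin (t x) ((s x).2 j) (e x))
  fun_prop

end ViaMin

section Room

variable {p q : ℕ} {ι : Type} [Fintype ι] {R : ι → Set (Fin q)} {c : ι → Pt p q}

noncomputable def roomBound (R : ι → Set (Fin q)) (c : ι → Pt p q) :
    Option (ι ⊕ {x : ι × Fin q // x.2 ∉ R x.1} ⊕ {x : ι × ι // x.1 ≠ x.2}) → ℝ
  | none => 1
  | some (.inl i) => 1 - ‖c i‖
  | some (.inr (.inl x)) => (c x.1.1).2 x.1.2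
  | some (.inr (.inr x)) => dist (c x.1.1) (c x.1.2) / 2

-- The entry `none` makes the index type nonempty, as `Finset.inf'` requires.
open Classical in
noncomputable def room (R : ι → Set (Fin q)) (c : ι → Pt p q) : ℝ :=
  Finset.univ.inf' Finset.univ_nonempty (roomBound R c)

open Classical in
lemma room_le_roomBound (g) : room R c ≤ roomBound R c g :=
  Finset.inf'_le _ (Finset.mem_univ g)

lemma room_le_one_sub_norm (i : ι) : room R c ≤ 1 - ‖c i‖ :=
  room_le_roomBound (some (.inl i))

lemma room_le_snd {i : ι} {j : Fin q} (hj : j ∉ R i) : room R c ≤ (c i).2 j :=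
  room_le_roomBound (some (.inr (.inl ⟨(i, j), hj⟩)))

lemma room_add_room_le_dist {i i' : ι} (h : i ≠ i') :
    room R c + room R c ≤ dist (c i) (c i') := by
  have : room R c ≤ dist (c i) (c i') / 2 := room_le_roomBound (some (.inr (.inr ⟨(i, i'), h⟩)))
  linarith

open Classical in
lemma room_pos (hc : c ∈ ConfSet p q ι R) : 0 < room R c := by
  refine (Finset.lt_inf'_iff _).2 fun g _ => ?_
  rcases g with _ | i | ⟨⟨i, j⟩, hj⟩ | ⟨⟨i, i'⟩, hii'⟩
  · exact one_pos
  · have hi := (cube_eq_ball_inter univ ▸ (hc.1 i).1).1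
    simpa [roomBound] using hi
  · exact lt_of_le_of_ne (((hc.1 i).1.2 j).1 trivial).1 fun h => hj (((hc.1 i).2 j).1 h.symm)
  · exact half_pos (dist_pos.2 fun h => hii' (hc.2 h))

@[fun_prop]
lemma continuous_room : Continuous (room (p := p) R) :=
  Continuous.finset_inf'_apply _ fun g _ => by
    rcases g with _ | i | x | x <;> simp only [roomBound] <;> fun_prop

end Room

namespace RectSpace

variable {p q : ℕ} {ι : Type} {R : ι → Set (Fin q)}

def IsRectTuple (R : ι → Set (Fin q)) (f : ι → C(Pt p q, Pt p q)) : Prop :=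
  (∀ i, OpenRectEmb p q (f i) (R i) Set.univ) ∧
    ∀ (i j : ι) (x y : Pt p q), x ∈ cube p q (R i) → y ∈ cube p q (R j) →
      f i x = f j y → i = j ∧ x = y

def rectTuple (s c : ι → Pt p q) (i : ι) : C(Pt p q, Pt p q) :=
  ⟨rectMap (s i) (c i), by fun_prop⟩

lemma _root_.Continuous.rectTuple {X : Type*} [TopologicalSpace X] {s c : X → ι → Pt p q}
    (hs : Continuous s) (hc : Continuous c) : Continuous fun x => rectTuple (s x) (c x) :=
  continuous_pi fun i => ContinuousMap.continuous_of_continuous_uncurry _ <|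
    Continuous.rectMap (by fun_prop) (by fun_prop) continuous_snd

def AdmissibleScales (R : ι → Set (Fin q)) (a c : ι → Pt p q) : Prop :=
  (∀ i, IsPosScale (a i)) ∧ (∀ i, OpenRectEmb p q (rectMap (a i) (c i)) (R i) univ) ∧
    Pairwise (Disjoint on fun i => rectMap (a i) (c i) '' cube p q (R i))

namespace AdmissibleScales

variable {a s c : ι → Pt p q}

lemma mono (h : AdmissibleScales R a c) (hs : ∀ i, IsPosScale (s i)) (hsa : s ≤ a) :
    AdmissibleScales R s c := by
  obtain ⟨ha, hemb, hdisj⟩ := h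
  refine ⟨hs, fun i => openRectEmb_rectMap_of_le (ha i) (hemb i) (hs i) (hsa i),
    fun i j hij => (hdisj hij).mono ?_ ?_⟩ <;>
  exact image_rectMap_subset_of_le (ha _) (hs _).nonneg (hsa _)

lemma isRectTuple (h : AdmissibleScales R a c) : IsRectTuple R (rectTuple a c) := by
  obtain ⟨ha, hemb, hdisj⟩ := h
  refine ⟨hemb, fun i j x y hx hy hxy => ?_⟩
  obtain rfl : i = j := by
    by_contra hij
    exact (hdisj hij).ne_of_mem ⟨x, hx, rfl⟩ ⟨y, hy, rfl⟩ hxy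
  exact ⟨rfl, rectMap_injective (ha i) hxy⟩

end AdmissibleScales

def scale (f : RectSpace p q ι R) (i : ι) : Pt p q := f.1 i 1 - f.1 i 0

def center (f : RectSpace p q ι R) (i : ι) : Pt p q := f.1 i 0

lemma continuous_apply_apply (i : ι) (x : Pt p q) :
    Continuous fun f : RectSpace p q ι R => f.1 i x :=
  (continuous_eval_const x).comp ((continuous_apply i).comp continuous_subtype_val)

@[fun_prop]
lemma continuous_scale : Continuous (scale : RectSpace p q ι R → ι → Pt p q) :=
  continuous_pi fun i => (continuous_apply_apply i 1).sub (continuous_apply_apply i 0)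

@[fun_prop]
lemma continuous_center : Continuous (center : RectSpace p q ι R → ι → Pt p q) :=
  continuous_pi fun i => continuous_apply_apply i 0

lemma isPosScale_scale (f : RectSpace p q ι R) (i : ι) : IsPosScale (scale f i) :=
  (IsRectilinear.eq_rectMap (f.2.1 i).1).1

lemma coe_eq_rectMap (f : RectSpace p q ι R) (i : ι) :
    ⇑(f.1 i) = rectMap (scale f i) (center f i) :=
  (IsRectilinear.eq_rectMap (f.2.1 i).1).2

lemma rectTuple_scale_center (f : RectSpace p q ι R) : rectTuple (scale f) (center f) = f.1 :=
  funext fun i => ContinuousMap.coe_injective (coe_eq_rectMap f i).symm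

lemma admissibleScales_scale (f : RectSpace p q ι R) :
    AdmissibleScales R (scale f) (center f) := by
  refine ⟨isPosScale_scale f, fun i => coe_eq_rectMap f i ▸ f.2.1 i, fun i j hij => ?_⟩
  simp only [onFun, ← coe_eq_rectMap]
  rw [Set.disjoint_left]
  rintro _ ⟨x, hx, rfl⟩ ⟨y, hy, hxy⟩
  exact hij (f.2.2 i j x y hx hy hxy.symm).1

lemma center_mem_confSet (f : RectSpace p q ι R) : center f ∈ ConfSet p q ι R :=
  ⟨fun i => ⟨(f.2.1 i).2.1 ⟨0, zero_mem_cube _, rfl⟩,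
    ((openRectEmb_rectMap_iff (isPosScale_scale f i)).1 (coe_eq_rectMap f i ▸ f.2.1 i)).1⟩,
    fun i j h => (f.2.2 i j 0 0 (zero_mem_cube _) (zero_mem_cube _) h).1⟩

variable [Fintype ι]

lemma admissibleScales_room {c : ι → Pt p q} (hc : c ∈ ConfSet p q ι R) :
    AdmissibleScales R (fun _ => room R c • 1) c := by
  have he := room_pos hc
  refine ⟨fun _ => isPosScale_smul_one he, fun i => ?_, fun i j hij => ?_⟩
  · exact openRectEmb_rectMap_of_subset (isPosScale_smul_one he) (hc.1 i).2
      (image_rectMap_smul_one_subset_cube he (hc.1 i).1 (room_le_one_sub_norm i)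
        fun _ => room_le_snd)
  · exact (Metric.ball_disjoint_ball (room_add_room_le_dist hij)).mono
      (image_rectMap_smul_one_subset_ball he) (image_rectMap_smul_one_subset_ball he)

lemma admissibleScales_viaMinScale {t : ℝ} (ht : t ∈ Icc (0 : ℝ) 1) (f : RectSpace p q ι R) :
    AdmissibleScales R (fun i => viaMinScale t (room R (center f)) (scale f i)) (center f) := by
  have hc := center_mem_confSet f
  have hpos i := isPosScale_viaMinScale (t := t) (isPosScale_scale f i) (room_pos hc)
  rcases le_total t (1 / 2) with h | h
  · exact (admissibleScales_scale f).mono hpos fun i => viaMinScale_le_left ht.1 h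
  · exact (admissibleScales_room hc).mono hpos fun i => viaMinScale_le_right h ht.2

noncomputable def evCenters : C(RectSpace p q ι R, ConfSet p q ι R) :=
  ⟨fun f => ⟨center f, center_mem_confSet f⟩, continuous_center.subtype_mk _⟩

noncomputable def ofCenters : C(ConfSet p q ι R, RectSpace p q ι R) where
  toFun c := ⟨rectTuple (fun _ => room R c.1 • 1) c.1, (admissibleScales_room c.2).isRectTuple⟩
  continuous_toFun := (Continuous.rectTuple (by fun_prop) continuous_subtype_val).subtype_mk _

lemma evCenters_comp_ofCenters :
    (evCenters : C(RectSpace p q ι R, ConfSet p q ι R)).comp ofCenters = ContinuousMap.id _ :=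
  ContinuousMap.ext fun _ => Subtype.ext <| funext fun _ => rectMap_zero

noncomputable def shrinkHomotopy :
    ContinuousMap.Homotopy (ContinuousMap.id (RectSpace p q ι R)) (ofCenters.comp evCenters) where
  toFun x := ⟨rectTuple (fun i => viaMinScale x.1 (room R (center x.2)) (scale x.2 i))
    (center x.2), (admissibleScales_viaMinScale x.1.2 x.2).isRectTuple⟩
  continuous_toFun := (Continuous.rectTuple (by fun_prop) (by fun_prop)).subtype_mk _
  map_zero_left f := Subtype.ext <| by simpa using rectTuple_scale_center f
  map_one_left f := Subtype.ext <| by simp only [Icc.coe_one, viaMinScale_one, ContinuousMap.comp_apply]; rfl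

end RectSpace

open RectSpace in
/-- The evaluation-at-centers map `ev₀ : Rect(⊔_i □^{p,R_i}, □^{p,q}) → Conf_R(□^{p,q})`
is well defined and continuous, admits a continuous section `s` with `ev₀ ∘ s = id` and
`s ∘ ev₀` homotopic to the identity; in particular `ev₀` is a homotopy equivalence. -/
theorem evaluation_at_centers_homotopy_equivalence (p q : ℕ) (ι : Type) [Fintype ι]
    (R : ι → Set (Fin q)) :
    ∃ hmem : ∀ f : RectSpace p q ι R, (fun i => f.1 i 0) ∈ ConfSet p q ι R,
    ∃ hev : Continuous fun f : RectSpace p q ι R =>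
        (⟨fun i => f.1 i 0, hmem f⟩ : ConfSet p q ι R),
    ∃ s : C(ConfSet p q ι R, RectSpace p q ι R),
      (∀ c : ConfSet p q ι R,
        (⟨fun i => (s c).1 i 0, hmem (s c)⟩ : ConfSet p q ι R) = c) ∧
      (s.comp ⟨fun f => ⟨fun i => f.1 i 0, hmem f⟩, hev⟩).Homotopic
        (ContinuousMap.id (RectSpace p q ι R)) ∧
      Nonempty (ContinuousMap.HomotopyEquiv (RectSpace p q ι R) (ConfSet p q ι R)) := by
  refine ⟨center_mem_confSet, evCenters.continuous, ofCenters, fun c => ?_, ⟨shrinkHomotopy.symm⟩,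
    ⟨⟨evCenters, ofCenters, ⟨shrinkHomotopy.symm⟩, ?_⟩⟩⟩
  · exact DFunLike.congr_fun evCenters_comp_ofCenters c
  · rw [evCenters_comp_ofCenters]
end
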